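/- Let P be a left reversible submonoid of a (discrete) group G, i.e., pP ∩ qP ≠ ∅ for all p, q ∈ P. Then L̇_a ≠ 0 for every word a over P; in particular K(a) ≠ ∅ for every neutral word a, and consequently the constant map P → ℂ, p ↦ 1, is a Li-covariant representation of P. -/
import Mathlib


noncomputable section
set_option synthInstance.maxHeartbeats 1000000
set_option maxHeartbeats 1000000
set_option linter.unusedVariables false

open scoped ENNReal

/-- `ℓ²(ι)` with complex coefficients. -/
abbrev l2 (ι : Type*) : Type _ := lp (fun _ : ι => ℂ) 2

/-- The canonical orthonormal basis vector `δ_i` of `ℓ²(ι)`. -/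
noncomputable def ket {ι : Type*} (i : ι) : l2 ι :=
  haveI := Classical.decEq ι
  lp.single 2 i 1

variable {G : Type*} [Group G]

/-- A word `a = (p₁, p₂, …, p_{2k-1}, p_{2k})` of even length over `P`, recorded as the list of
its consecutive pairs `(p₁,p₂), (p₃,p₄), …, (p_{2k-1},p_{2k})`. -/
abbrev Word (P : Submonoid G) := List (P × P)

/-- `ȧ = p₁⁻¹ p₂ ⋯ p_{2k-1}⁻¹ p_{2k} ∈ G`. -/
def wordElem (P : Submonoid G) (w : Word P) : G :=
  (w.map (fun pq => ((pq.1 : G))⁻¹ * (pq.2 : G))).prod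

/-- A word is neutral if `ȧ = e`. -/
def IsNeutral (P : Submonoid G) (w : Word P) : Prop := wordElem P w = 1

/-- `V̇_a = V_{p₁}^* V_{p₂} ⋯ V_{p_{2k-1}}^* V_{p_{2k}}`. -/
def dotted {A : Type*} [Monoid A] [Star A] (P : Submonoid G) (V : P → A) (w : Word P) : A :=
  (w.map (fun pq => star (V pq.1) * V pq.2)).prod

/-- The constructible right ideal `K(a) = {p ∈ P : L̇_a δ_p = δ_p}`, where `L` is the left
regular representation of `P` on `ℓ²(P)`. -/
def KIdeal (P : Submonoid G) (L : P → (l2 P →L[ℂ] l2 P)) (w : Word P) : Set P :=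
  {p : P | dotted P L w (ket p) = ket p}

open scoped InnerProductSpace

lemma inner_ket_left {ι : Type*} (i : ι) (v : l2 ι) : ⟪ket i, v⟫_ℂ = v i := by
  classical
  rw [ket, lp.inner_single_left]
  simp [RCLike.inner_apply]

lemma inner_ket_self {ι : Type*} (i : ι) : ⟪ket i, ket i⟫_ℂ = 1 := by
  classical
  rw [inner_ket_left, ket, lp.single_apply_self]

lemma inner_ket_ne {ι : Type*} {i j : ι} (h : i ≠ j) : ⟪ket i, ket j⟫_ℂ = 0 := by
  classical
  rw [inner_ket_left, ket, lp.single_apply_ne]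
  exact h

lemma ket_ne_zero {ι : Type*} (i : ι) : ket i ≠ (0 : l2 ι) := by
  intro h
  have := inner_ket_self i
  rw [h] at this
  simp at this

lemma star_L_ket (P : Submonoid G) (L : P → (l2 P →L[ℂ] l2 P))
    (hL : ∀ p q : P, L p (ket q) = ket (p * q)) (p m : P) :
    (star (L p)) (ket (p * m)) = ket m := by
  apply lp.ext
  funext r
  rw [← inner_ket_left r, ← inner_ket_left r, ContinuousLinearMap.star_eq_adjoint,
    ContinuousLinearMap.adjoint_inner_right, hL]
  by_cases h : r = m
  · subst h; rw [inner_ket_self, inner_ket_self]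
  · rw [inner_ket_ne, inner_ket_ne h]
    intro he
    apply h
    have : ((p : G)) * r = (p : G) * m := by exact_mod_cast congrArg (Subtype.val) he
    exact Subtype.ext (mul_left_cancel this)

lemma key (P : Submonoid G) (L : P → (l2 P →L[ℂ] l2 P))
    (hL : ∀ p q : P, L p (ket q) = ket (p * q))
    (hrev : ∀ p q : P, ∃ a b : P, p * a = q * b) (w : Word P) :
    ∃ x y : P, (y : G) = wordElem P w * x ∧
      ∀ c : P, dotted P L w (ket (x * c)) = ket (y * c) := by
  induction w with
  | nil =>
      refine ⟨1, 1, by simp [wordElem], fun c => ?_⟩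
      simp [dotted]
  | cons pq rest ih =>
      obtain ⟨x, y, h1, h2⟩ := ih
      obtain ⟨p, q⟩ := pq
      obtain ⟨a, b, hab⟩ := hrev p (q * y)
      have habG : (p : G) * a = (q : G) * y * b := by exact_mod_cast congrArg Subtype.val hab
      refine ⟨x * b, a, ?_, fun c => ?_⟩
      · have : wordElem P ((p, q) :: rest) = (p : G)⁻¹ * q * wordElem P rest := by
          simp [wordElem]
        rw [this]
        have hx : wordElem P rest * ((x : G) * b) = (y : G) * b := by
          rw [← mul_assoc, ← h1]
        push_cast
        rw [mul_assoc ((p : G))⁻¹ ((q : G)) (wordElem P rest),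
          mul_assoc ((p : G))⁻¹ ((q : G) * wordElem P rest)]
        rw [show ((q : G)) * wordElem P rest * ((x : G) * (b : G)) =
          (q : G) * (wordElem P rest * ((x : G) * (b : G))) by group, hx,
          show ((q : G)) * ((y : G) * b) = (q : G) * y * b by group, ← habG]
        group
      · have hd : dotted P L ((p, q) :: rest) =
            (star (L p) * L q) * dotted P L rest := by
          simp [dotted]
        rw [hd]
        have : (x * b) * c = x * (b * c) := by rw [mul_assoc]
        rw [this]
        have happ : ((star (L p) * L q) * dotted P L rest) (ket (x * (b * c))) =
            (star (L p)) ((L q) (dotted P L rest (ket (x * (b * c))))) := rfl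
        rw [happ, h2, hL]
        have : q * (y * (b * c)) = p * (a * c) := by
          apply Subtype.ext
          push_cast
          rw [← mul_assoc, ← mul_assoc, ← mul_assoc, ← habG, mul_assoc]
        rw [this, star_L_ket P L hL]

/-- **(Left reversible submonoids have nonzero monomials.)**
If `P` is left reversible (`pP ∩ qP ≠ ∅` for all `p, q`), then `L̇_a ≠ 0` for every word
`a` over `P`; in particular `K(a) ≠ ∅` for every neutral word `a`, and consequently the
constant map `p ↦ 1 ∈ ℂ` is a Li-covariant representation of `P`. -/
theorem leftReversible_monomials_nonzero (P : Submonoid G)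
    (L : P → (l2 P →L[ℂ] l2 P))
    (hL : ∀ p q : P, L p (ket q) = ket (p * q))
    (hrev : ∀ p q : P, ∃ a b : P, p * a = q * b) :
    (∀ w : Word P, dotted P L w ≠ 0) ∧
    (∀ w : Word P, IsNeutral P w → (KIdeal P L w).Nonempty) ∧
    -- the constant map `p ↦ 1 ∈ ℂ` is a Li-covariant representation:
    ((fun _ : P => (1 : ℂ)) 1 = 1) ∧
    (∀ p q : P, (fun _ : P => (1 : ℂ)) (p * q) =
      (fun _ : P => (1 : ℂ)) p * (fun _ : P => (1 : ℂ)) q) ∧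
    (∀ p : P, star ((fun _ : P => (1 : ℂ)) p) * (fun _ : P => (1 : ℂ)) p = 1) ∧
    (∀ w : Word P, IsNeutral P w → KIdeal P L w = ∅ →
      dotted P (fun _ : P => (1 : ℂ)) w = 0) ∧
    (∀ w w' : Word P, IsNeutral P w → IsNeutral P w' → KIdeal P L w = KIdeal P L w' →
      dotted P (fun _ : P => (1 : ℂ)) w = dotted P (fun _ : P => (1 : ℂ)) w') := by
  have hne : ∀ w : Word P, IsNeutral P w → (KIdeal P L w).Nonempty := by
    intro w hw
    obtain ⟨x, y, h1, h2⟩ := key P L hL hrev w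
    have hxy : y = x := by
      apply Subtype.ext
      rw [h1, hw, one_mul]
    refine ⟨x, ?_⟩
    have := h2 1
    rw [mul_one, hxy, mul_one] at this
    exact this
  have hone : ∀ w : Word P, dotted P (fun _ : P => (1 : ℂ)) w = 1 := by
    intro w
    induction w with
    | nil => simp [dotted]
    | cons pq rest ih => simp only [dotted, List.map_cons, List.prod_cons, star_one, one_mul] at ih ⊢; exact ih
  refine ⟨?_, hne, rfl, fun p q => (one_mul 1).symm, fun p => by simp, ?_, ?_⟩
  · intro w h0
    obtain ⟨x, y, h1, h2⟩ := key P L hL hrev w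
    have := h2 1
    rw [h0] at this
    exact ket_ne_zero (y * 1) (by simpa using this.symm)
  · intro w hw hK
    exact absurd hK (by rw [← Set.not_nonempty_iff_eq_empty] at *; exact fun h => h (hne w hw))
  · intro w w' _ _ _
    rw [hone, hone]


end
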